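/- arXiv:1911.07487 — 5 statements merged into one kernel-verified Lean document; each statement's English description precedes it below -/
import Mathlib

section
/- Let q ≥ 3 and let B ⊆ SL₂(F_q) be the standard Borel subgroup of upper-triangular matrices, and let g ∈ SL₂(F_q) with g ∉ B. Then for every x ∈ SL₂(F_q), the number of pairs (b₁, b₂) ∈ B × B with b₁ g b₂ = x is at most q − 1. -/
open Finset

open scoped Classical in
/-- If `g ∉ B`, the standard Borel subgroup of upper-triangular matrices of
`SL₂(F_q)`, then for every `x` the number of pairs `(b₁,b₂) ∈ B × B` with
`b₁ * g * b₂ = x` is at most `q - 1`. -/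
theorem card_rep_BgB_le {F : Type*} [Field F] [Fintype F] [DecidableEq F] (q : ℕ)
    (hq : Fintype.card F = q) (hq3 : 3 ≤ q)
    (g x : Matrix.SpecialLinearGroup (Fin 2) F) (hg : g.1 1 0 ≠ 0) :
    (((Finset.univ.filter fun h : Matrix.SpecialLinearGroup (Fin 2) F => h.1 1 0 = 0) ×ˢ
        (Finset.univ.filter fun h : Matrix.SpecialLinearGroup (Fin 2) F => h.1 1 0 = 0)).filter
      (fun t : Matrix.SpecialLinearGroup (Fin 2) F × Matrix.SpecialLinearGroup (Fin 2) F =>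
        t.1 * g * t.2 = x)).card ≤ q - 1 := by
  classical
  set S := (((Finset.univ.filter fun h : Matrix.SpecialLinearGroup (Fin 2) F => h.1 1 0 = 0) ×ˢ
        (Finset.univ.filter fun h : Matrix.SpecialLinearGroup (Fin 2) F => h.1 1 0 = 0)).filter
      (fun t : Matrix.SpecialLinearGroup (Fin 2) F × Matrix.SpecialLinearGroup (Fin 2) F =>
        t.1 * g * t.2 = x)) with hSdef
  have mem_S : ∀ t : Matrix.SpecialLinearGroup (Fin 2) F × Matrix.SpecialLinearGroup (Fin 2) F, t ∈ S ↔ (t.1.1 1 0 = 0 ∧ t.2.1 1 0 = 0 ∧ t.1 * g * t.2 = x) := by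
    intro t
    simp [hSdef, Finset.mem_filter, Finset.mem_product, and_assoc]
  have detfact : ∀ h : Matrix.SpecialLinearGroup (Fin 2) F, h.1 1 0 = 0 → h.1 0 0 * h.1 1 1 = 1 := by
    intro h h10
    have hd := h.2
    rw [Matrix.det_fin_two] at hd
    linear_combination hd + h.1 0 1 * h10
  -- key equations
  have key : ∀ t : Matrix.SpecialLinearGroup (Fin 2) F × Matrix.SpecialLinearGroup (Fin 2) F, t ∈ S →
      t.1.1 1 1 * (g.1 1 0 * t.2.1 0 0) = x.1 1 0 ∧
      t.1.1 1 1 * (g.1 1 0 * t.2.1 0 1 + g.1 1 1 * t.2.1 1 1) = x.1 1 1 := by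
    intro t ht
    obtain ⟨h1, h2, heq⟩ := (mem_S t).1 ht
    have e0 : (t.1.1 * g.1 * t.2.1) 1 0 = x.1 1 0 :=
      congrArg (fun m => m 1 0) (congrArg Subtype.val heq)
    have e1 : (t.1.1 * g.1 * t.2.1) 1 1 = x.1 1 1 :=
      congrArg (fun m => m 1 1) (congrArg Subtype.val heq)
    simp only [Matrix.mul_apply, Fin.sum_univ_two] at e0 e1
    constructor
    · linear_combination e0 - (g.1 0 0 * t.2.1 0 0 + g.1 0 1 * t.2.1 1 0) * h1
        - t.1.1 1 1 * g.1 1 1 * h2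
    · linear_combination e1 - (g.1 0 0 * t.2.1 0 1 + g.1 0 1 * t.2.1 1 1) * h1
  by_cases hx : x.1 1 0 = 0
  · -- S is empty
    have : S = ∅ := by
      rw [Finset.eq_empty_iff_forall_notMem]
      intro t ht
      obtain ⟨h1, h2, heq⟩ := (mem_S t).1 ht
      have e0 := (key t ht).1
      rw [hx] at e0
      have h11 : t.1.1 1 1 ≠ 0 := fun h => by simpa [h] using detfact t.1 h1
      have h00 : t.2.1 0 0 ≠ 0 := fun h => by simpa [h] using detfact t.2 h2
      exact (mul_ne_zero h11 (mul_ne_zero hg h00)) e0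
    rw [this]
    simp
  · -- injectivity of t ↦ t.2.1 0 0 into univ.erase 0
    have hcard : (Finset.univ.erase (0 : F)).card = q - 1 := by
      rw [Finset.card_erase_of_mem (Finset.mem_univ 0), Finset.card_univ, hq]
    rw [← hcard]
    apply Finset.card_le_card_of_injOn (fun t => t.2.1 0 0)
    · intro t ht
      obtain ⟨h1, h2, heq⟩ := (mem_S t).1 ht
      have h00 : t.2.1 0 0 ≠ 0 := fun h => by simpa [h] using detfact t.2 h2
      simp [h00]
    · intro t ht t' ht' hab
      simp only at hab
      obtain ⟨h1, h2, heq⟩ := (mem_S t).1 (by exact ht)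
      obtain ⟨h1', h2', heq'⟩ := (mem_S t').1 (by exact ht')
      obtain ⟨e0, e1⟩ := key t ht
      obtain ⟨e0', e1'⟩ := key t' ht'
      have h00 : t.2.1 0 0 ≠ 0 := fun h => by simpa [h] using detfact t.2 h2
      have hb11 : t.1.1 1 1 ≠ 0 := fun h => by simpa [h] using detfact t.1 h1
      -- diagonal of b1 agrees
      have hd1 : t.1.1 1 1 = t'.1.1 1 1 := by
        have : t.1.1 1 1 * (g.1 1 0 * t.2.1 0 0) = t'.1.1 1 1 * (g.1 1 0 * t.2.1 0 0) := by
          rw [e0, hab, e0']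
        exact mul_right_cancel₀ (mul_ne_zero hg h00) this
      -- b2 11 agrees
      have h2b : t.2.1 1 1 = t'.2.1 1 1 := by
        have d := detfact t.2 h2
        have d' := detfact t'.2 h2'
        rw [← hab] at d'
        have := d.trans d'.symm
        exact mul_left_cancel₀ h00 this
      -- b2 01 agrees
      have h2c : t.2.1 0 1 = t'.2.1 0 1 := by
        have : t.1.1 1 1 * (g.1 1 0 * t.2.1 0 1 + g.1 1 1 * t.2.1 1 1)
            = t.1.1 1 1 * (g.1 1 0 * t'.2.1 0 1 + g.1 1 1 * t'.2.1 1 1) := by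
          rw [e1, hd1, e1']
        have := mul_left_cancel₀ hb11 this
        rw [h2b] at this
        have := add_right_cancel this
        exact mul_left_cancel₀ hg this
      have hb2 : t.2 = t'.2 := by
        apply Subtype.ext
        ext i j
        fin_cases i <;> fin_cases j
        · exact hab
        · exact h2c
        · exact h2.trans h2'.symm
        · exact h2b
      have hb1 : t.1 = t'.1 := by
        have : t.1 * (g * t.2) = t'.1 * (g * t.2) := by
          rw [← mul_assoc, heq, hb2, ← mul_assoc, heq']
        exact mul_right_cancel this
      exact Prod.ext hb1 hb2
end

section
/- Let q ≥ 3, B the standard Borel subgroup of SL₂(F_q), and g ∉ B. Then E(B, gB) ≤ (q−1)|B|², where E(B, gB) = |{(b₁, c₁, b₂, c₂) ∈ B² × (gB)² : b₁⁻¹c₁ = b₂⁻¹c₂}|. -/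
/-!
For a subgroup `B` and `c₁ = g u`, `c₂ = g v` in `gB`, the relation `b₁⁻¹ c₁ = b₂⁻¹ c₂` gives
`b₂ b₁⁻¹ = c₂ c₁⁻¹ = g (v u⁻¹) g⁻¹`, so `b₂ b₁⁻¹ ∈ B ∩ g B g⁻¹`, and a quadruple is determined by
`b₁`, `c₁` and this element. Hence `E(B, gB) ≤ |B ∩ g B g⁻¹| |B|²`. When `B` is the Borel subgroup
of `SL₂(F)` and `g ∉ B`, the intersection `B ∩ g B g⁻¹` is a torus: its elements are determined by
their upper left entry, which is a unit, so it has at most `q - 1` elements.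
-/

open Finset
open scoped Pointwise

section Energy

variable {G : Type*} [Group G] [DecidableEq G]

theorem card_energy_le_of_mul_inv_mem (A C T : Finset G)
    (hT : ∀ a₁ ∈ A, ∀ c₁ ∈ C, ∀ a₂ ∈ A, ∀ c₂ ∈ C, a₁⁻¹ * c₁ = a₂⁻¹ * c₂ → a₂ * a₁⁻¹ ∈ T) :
    #((A ×ˢ C ×ˢ A ×ˢ C).filter fun t : G × G × G × G => t.1⁻¹ * t.2.1 = t.2.2.1⁻¹ * t.2.2.2)
      ≤ #A * #C * #T := by
  rw [mul_assoc, ← card_product, ← card_product]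
  refine card_le_card_of_injOn (fun t => (t.1, t.2.1, t.2.2.1 * t.1⁻¹)) ?_ ?_
  · rintro ⟨a₁, c₁, a₂, c₂⟩ ht
    simp only [mem_coe, mem_filter, mem_product] at ht
    obtain ⟨⟨ha₁, hc₁, ha₂, hc₂⟩, heq⟩ := ht
    simpa only [coe_product, Set.mem_prod, mem_coe] using ⟨ha₁, hc₁, hT a₁ ha₁ c₁ hc₁ a₂ ha₂ c₂ hc₂ heq⟩
  · rintro ⟨a₁, c₁, a₂, c₂⟩ ht ⟨a₁', c₁', a₂', c₂'⟩ ht' h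
    simp only [mem_coe, mem_filter] at ht ht'
    simp only [Prod.mk.injEq] at h
    obtain ⟨rfl, rfl, h⟩ := h
    obtain rfl : a₂ = a₂' := mul_right_cancel h
    have hc₂ : c₂ = c₂' := by
      rw [← mul_inv_cancel_left a₂ c₂, ← ht.2, ht'.2, mul_inv_cancel_left]
    rw [hc₂]

theorem card_energy_subgroup_smul_le (H : Subgroup G) [DecidablePred (· ∈ H)] (A : Finset G) (hA : ∀ x, x ∈ A ↔ x ∈ H)
    (g : G) :
    #((A ×ˢ (g • A) ×ˢ A ×ˢ (g • A)).filter
        fun t : G × G × G × G => t.1⁻¹ * t.2.1 = t.2.2.1⁻¹ * t.2.2.2)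
      ≤ #(A.filter fun x => g⁻¹ * x * g ∈ H) * #A ^ 2 := by
  have h := card_energy_le_of_mul_inv_mem A (g • A) (A.filter fun x => g⁻¹ * x * g ∈ H) ?_
  · rw [card_smul_finset] at h
    linarith
  rintro a₁ ha₁ _ hc₁ a₂ ha₂ _ hc₂ heq
  obtain ⟨u, hu, rfl⟩ := mem_smul_finset.mp hc₁
  obtain ⟨v, hv, rfl⟩ := mem_smul_finset.mp hc₂
  rw [hA] at ha₁ ha₂ hu hv
  have hconj : a₂ * a₁⁻¹ = g * (v * u⁻¹) * g⁻¹ := by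
    rw [smul_eq_mul, smul_eq_mul] at heq
    calc a₂ * a₁⁻¹ = a₂ * (a₁⁻¹ * (g * u)) * (g * u)⁻¹ := by group
      _ = g * (v * u⁻¹) * g⁻¹ := by rw [heq]; group
  refine mem_filter.mpr ⟨(hA _).mpr (H.mul_mem ha₂ (H.inv_mem ha₁)), ?_⟩
  rw [hconj, show g⁻¹ * (g * (v * u⁻¹) * g⁻¹) * g = v * u⁻¹ by group]
  exact H.mul_mem hv (H.inv_mem hu)

end Energy

namespace Matrix.SpecialLinearGroup

variable {F : Type*} [Field F]

theorem apply_one_zero_mul_eq_zero {x y : SpecialLinearGroup (Fin 2) F} (hx : x.1 1 0 = 0)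
    (hy : y.1 1 0 = 0) : (x * y).1 1 0 = 0 := by
  simp [coe_mul, mul_apply, Fin.sum_univ_two, hx, hy]

theorem apply_one_zero_inv_eq_zero {x : SpecialLinearGroup (Fin 2) F} (hx : x.1 1 0 = 0) :
    (x⁻¹).1 1 0 = 0 := by
  simp [coe_inv, adjugate_fin_two, hx]

variable (F) in
def borel : Subgroup (SpecialLinearGroup (Fin 2) F) where
  carrier := {x | x.1 1 0 = 0}
  mul_mem' := apply_one_zero_mul_eq_zero
  one_mem' := by simp
  inv_mem' := apply_one_zero_inv_eq_zero

@[simp]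
theorem mem_borel {x : SpecialLinearGroup (Fin 2) F} : x ∈ borel F ↔ x.1 1 0 = 0 :=
  Iff.rfl

theorem apply_zero_zero_mul_apply_one_one_of_mem_borel {x : SpecialLinearGroup (Fin 2) F}
    (hx : x ∈ borel F) : x.1 0 0 * x.1 1 1 = 1 := by
  have hdet := x.2
  rw [det_fin_two, mem_borel.mp hx, mul_zero, sub_zero] at hdet
  exact hdet

theorem mul_apply_zero_one_of_mem_borel_of_conj_mem_borel {g x : SpecialLinearGroup (Fin 2) F}
    (hg : g.1 1 0 ≠ 0) (hx : x ∈ borel F) (hgx : g⁻¹ * x * g ∈ borel F) :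
    g.1 1 0 * x.1 0 1 = g.1 0 0 * (x.1 1 1 - x.1 0 0) := by
  rw [mem_borel] at hx hgx
  simp only [coe_mul, coe_inv, adjugate_fin_two, mul_apply, Fin.sum_univ_two, of_apply,
    cons_val', cons_val_zero, cons_val_one, empty_val', cons_val_fin_one, hx] at hgx
  exact mul_left_cancel₀ hg (by linear_combination -hgx)

theorem eq_of_mem_borel_inf_conj {g x y : SpecialLinearGroup (Fin 2) F} (hg : g.1 1 0 ≠ 0)
    (hx : x ∈ borel F) (hgx : g⁻¹ * x * g ∈ borel F)
    (hy : y ∈ borel F) (hgy : g⁻¹ * y * g ∈ borel F) (hxy : x.1 0 0 = y.1 0 0) : x = y := by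
  have hx00 : x.1 0 0 ≠ 0 := left_ne_zero_of_mul_eq_one
    (apply_zero_zero_mul_apply_one_one_of_mem_borel hx)
  have h11 : x.1 1 1 = y.1 1 1 := mul_left_cancel₀ hx00 <| by
    rw [apply_zero_zero_mul_apply_one_one_of_mem_borel hx, hxy,
      apply_zero_zero_mul_apply_one_one_of_mem_borel hy]
  have h01 : x.1 0 1 = y.1 0 1 := mul_left_cancel₀ hg <| by
    rw [mul_apply_zero_one_of_mem_borel_of_conj_mem_borel hg hx hgx,
      mul_apply_zero_one_of_mem_borel_of_conj_mem_borel hg hy hgy, hxy, h11]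
  have h10 : x.1 1 0 = y.1 1 0 := by rw [mem_borel.mp hx, mem_borel.mp hy]
  ext i j
  fin_cases i <;> fin_cases j <;> assumption

theorem card_le_card_sub_one_of_subset_borel_inf_conj [Fintype F] [DecidableEq F]
    {g : SpecialLinearGroup (Fin 2) F} (hg : g.1 1 0 ≠ 0) (A : Finset (SpecialLinearGroup (Fin 2) F))
    (hA : ∀ x ∈ A, x ∈ borel F ∧ g⁻¹ * x * g ∈ borel F) : #A ≤ Fintype.card F - 1 := by
  rw [← card_univ, ← card_erase_of_mem (mem_univ 0)]
  refine card_le_card_of_injOn (fun x => x.1 0 0) (fun x hx => ?_) (fun x hx y hy hxy => ?_)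
  · exact mem_erase.mpr ⟨left_ne_zero_of_mul_eq_one
      (apply_zero_zero_mul_apply_one_one_of_mem_borel (hA x hx).1), mem_univ _⟩
  · exact eq_of_mem_borel_inf_conj hg (hA x hx).1 (hA x hx).2 (hA y hy).1 (hA y hy).2 hxy

end Matrix.SpecialLinearGroup

open scoped Classical in
theorem energy_B_gB_le_general {F : Type*} [Field F] [Fintype F] [DecidableEq F] (q : ℕ)
    (hq : Fintype.card F = q)
    (g : Matrix.SpecialLinearGroup (Fin 2) F) (hg : g.1 1 0 ≠ 0)
    (B : Finset (Matrix.SpecialLinearGroup (Fin 2) F))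
    (hB : B = Finset.univ.filter fun h : Matrix.SpecialLinearGroup (Fin 2) F => h.1 1 0 = 0) :
    ((B ×ˢ (g • B) ×ˢ B ×ˢ (g • B)).filter
      (fun t : Matrix.SpecialLinearGroup (Fin 2) F × Matrix.SpecialLinearGroup (Fin 2) F ×
          Matrix.SpecialLinearGroup (Fin 2) F × Matrix.SpecialLinearGroup (Fin 2) F =>
        t.1⁻¹ * t.2.1 = t.2.2.1⁻¹ * t.2.2.2)).card ≤ (q - 1) * B.card ^ 2 := by
  open Matrix.SpecialLinearGroup in
  have hB' : ∀ x, x ∈ B ↔ x ∈ borel F := by simp [hB]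
  have htorus : #(B.filter fun x => g⁻¹ * x * g ∈ borel F) ≤ q - 1 :=
    hq ▸ card_le_card_sub_one_of_subset_borel_inf_conj hg _ fun x hx =>
      ⟨(hB' x).mp (mem_filter.mp hx).1, (mem_filter.mp hx).2⟩
  calc _ ≤ #(B.filter fun x => g⁻¹ * x * g ∈ borel F) * #B ^ 2 :=
        card_energy_subgroup_smul_le (borel F) B hB' g
    _ ≤ (q - 1) * #B ^ 2 := Nat.mul_le_mul_right _ htorus

open scoped Classical in
/-- If `g ∉ B`, the standard Borel subgroup of `SL₂(F_q)` (`q ≥ 3`), then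
`E(B, gB) ≤ (q-1)|B|²`, where `E(B, gB)` counts quadruples
`(b₁, c₁, b₂, c₂) ∈ B × gB × B × gB` with `b₁⁻¹ c₁ = b₂⁻¹ c₂`. -/
theorem energy_B_gB_le {F : Type*} [Field F] [Fintype F] [DecidableEq F] (q : ℕ)
    (hq : Fintype.card F = q) (hq3 : 3 ≤ q)
    (g : Matrix.SpecialLinearGroup (Fin 2) F) (hg : g.1 1 0 ≠ 0)
    (B : Finset (Matrix.SpecialLinearGroup (Fin 2) F))
    (hB : B = Finset.univ.filter fun h : Matrix.SpecialLinearGroup (Fin 2) F => h.1 1 0 = 0) :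
    ((B ×ˢ (g • B) ×ˢ B ×ˢ (g • B)).filter
      (fun t : Matrix.SpecialLinearGroup (Fin 2) F × Matrix.SpecialLinearGroup (Fin 2) F ×
          Matrix.SpecialLinearGroup (Fin 2) F × Matrix.SpecialLinearGroup (Fin 2) F =>
        t.1⁻¹ * t.2.1 = t.2.2.1⁻¹ * t.2.2.2)).card ≤ (q - 1) * B.card ^ 2 :=
  energy_B_gB_le_general q hq g hg B hB
end

section
/- Let G be a group, A a finite nonempty subset of G, and g ∈ G. Then |A| ≤ |Conj(g) ∩ AgA⁻¹| · |Centr(g) ∩ A⁻¹A|, where Conj(g) is the conjugacy class of g, Centr(g) is the centralizer of g, AgA⁻¹ = {a g b⁻¹ : a, b ∈ A}, and A⁻¹A = {a⁻¹b : a, b ∈ A}. -/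
open scoped Pointwise

/-- Pigeonhole bound for the Helfgott map: for a finite nonempty `A ⊆ G` and `g ∈ G`,
`|A| ≤ |Conj(g) ∩ A g A⁻¹| * |Centr(g) ∩ A⁻¹A|`. -/
theorem helfgott_pigeonhole {G : Type*} [Group G] (A : Finset G) (hA : A.Nonempty) (g : G) :
    A.card ≤ ({x : G | IsConj g x} ∩ ((A : Set G) * {g} * (A : Set G)⁻¹)).ncard *
      ({x : G | x * g = g * x} ∩ ((A : Set G)⁻¹ * (A : Set G))).ncard := by
  classical
  set f : G → G := fun a => a * g * a⁻¹ with hf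
  set S1 : Set G := {x : G | IsConj g x} ∩ ((A : Set G) * {g} * (A : Set G)⁻¹) with hS1
  set S2 : Set G := {x : G | x * g = g * x} ∩ ((A : Set G)⁻¹ * (A : Set G)) with hS2
  have hfin1 : S1.Finite := by
    apply Set.Finite.inter_of_right
    exact ((A.finite_toSet.mul (Set.finite_singleton g)).mul A.finite_toSet.inv)
  have hfin2 : S2.Finite := by
    apply Set.Finite.inter_of_right
    exact A.finite_toSet.inv.mul A.finite_toSet
  -- the image of A under f is contained in S1
  have himg : ((A.image f : Finset G) : Set G) ⊆ S1 := by
    intro x hx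
    simp only [Finset.coe_image, Set.mem_image, Finset.mem_coe] at hx
    obtain ⟨a, ha, rfl⟩ := hx
    refine ⟨isConj_iff.mpr ⟨a, rfl⟩, ?_⟩
    exact Set.mul_mem_mul (Set.mul_mem_mul ha rfl) (Set.inv_mem_inv.mpr ha)
  have h1 : (A.image f).card ≤ S1.ncard := by
    rw [← Set.ncard_coe_finset]
    exact Set.ncard_le_ncard himg hfin1
  -- each fiber injects into S2
  have h2 : ∀ b ∈ A.image f, (A.filter (fun a => f a = b)).card ≤ S2.ncard := by
    intro b hb
    obtain ⟨a₀, ha₀, rfl⟩ := Finset.mem_image.mp hb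
    set F := A.filter (fun a => f a = f a₀) with hF
    have hinj : Set.InjOn (fun a => a₀⁻¹ * a) F := fun x _ y _ h => by
      simpa using mul_left_cancel h
    have hsub : ((F.image (fun a => a₀⁻¹ * a) : Finset G) : Set G) ⊆ S2 := by
      intro x hx
      simp only [Finset.coe_image, Set.mem_image, Finset.mem_coe] at hx
      obtain ⟨a, ha, rfl⟩ := hx
      obtain ⟨haA, hfa⟩ := Finset.mem_filter.mp ha
      refine ⟨?_, Set.mul_mem_mul (Set.inv_mem_inv.mpr ha₀) haA⟩
      have : a * g * a⁻¹ = a₀ * g * a₀⁻¹ := hfa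
      show a₀⁻¹ * a * g = g * (a₀⁻¹ * a)
      have := congrArg (fun z => a₀⁻¹ * z * a) this
      simp only [mul_assoc, inv_mul_cancel_left, inv_mul_cancel, mul_one] at this ⊢
      simpa [mul_assoc] using this
    calc F.card = (F.image (fun a => a₀⁻¹ * a)).card := by
          rw [Finset.card_image_of_injOn]
          intro x hx y hy h
          exact hinj hx hy h
      _ ≤ S2.ncard := by
          rw [← Set.ncard_coe_finset]
          exact Set.ncard_le_ncard hsub hfin2
  calc A.card ≤ S2.ncard * (A.image f).card := Finset.card_le_mul_card_image A _ h2
    _ ≤ S2.ncard * S1.ncard := Nat.mul_le_mul_left _ h1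
    _ = S1.ncard * S2.ncard := Nat.mul_comm _ _
end

section
/- Let G be a group, A a finite nonempty subset of G, and g ∈ G. Then there exists a subset A₀ ⊆ A with |A₀| ≥ |A|/2 such that for every a₀ ∈ A₀, |A|/2 ≤ |Conj(g) ∩ AgA⁻¹| · |Centr(g) ∩ a₀⁻¹A|. -/
open scoped Pointwise

/-- Statistical version of the Helfgott-map bound: for a finite nonempty `A ⊆ G`
and `g ∈ G` there is `A₀ ⊆ A` with `|A₀| ≥ |A|/2` such that for any `a₀ ∈ A₀`,
`|A|/2 ≤ |Conj(g) ∩ A g A⁻¹| * |Centr(g) ∩ a₀⁻¹A|`. -/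
theorem helfgott_pigeonhole_statistical {G : Type*} [Group G]
    (A : Finset G) (hA : A.Nonempty) (g : G) :
    ∃ A₀ ⊆ A, (A.card : ℝ) / 2 ≤ A₀.card ∧ ∀ a₀ ∈ A₀,
      (A.card : ℝ) / 2 ≤
        ({x : G | IsConj g x} ∩ ((A : Set G) * {g} * (A : Set G)⁻¹)).ncard *
          ({x : G | x * g = g * x} ∩ (a₀⁻¹ • (A : Set G))).ncard := by
  classical
  set φ : G → G := fun a => a * g * a⁻¹ with hφ
  set T : Finset G := A.image φ with hT
  set N : ℕ := T.card with hN
  have hN0 : 0 < N := Finset.card_pos.2 (hA.image φ)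
  set f : G → ℕ := fun a => (A.filter (fun b => φ b = φ a)).card with hf
  -- fiber count identity
  have hfiber : ∀ a₀ ∈ A,
      ({x : G | x * g = g * x} ∩ (a₀⁻¹ • (A : Set G))).ncard = f a₀ := by
    intro a₀ ha₀
    have hset : ({x : G | x * g = g * x} ∩ (a₀⁻¹ • (A : Set G)))
        = ↑((a₀⁻¹ • A).filter (fun x => x * g = g * x)) := by
      ext x
      simp only [Set.mem_inter_iff, Set.mem_setOf_eq, Finset.coe_filter,
        Finset.mem_smul_finset, Set.mem_smul_set, Finset.mem_coe]
      tauto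
    rw [hset, Set.ncard_coe_finset]
    apply Finset.card_bij (fun x _ => a₀ * x)
    · intro x hx
      simp only [Finset.mem_filter, Finset.mem_smul_finset, smul_eq_mul] at hx ⊢
      obtain ⟨⟨a, ha, rfl⟩, hc⟩ := hx
      refine ⟨by simpa using ha, ?_⟩
      simp only [hφ]
      have : a₀ * (a₀⁻¹ * a) = a := by group
      rw [this]
      have hx' : (a₀⁻¹ * a) * g = g * (a₀⁻¹ * a) := hc
      have : a * g * a⁻¹ = a₀ * ((a₀⁻¹ * a) * g * (a₀⁻¹ * a)⁻¹) * a₀⁻¹ := by group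
      rw [this, hx', ]
      group
    · intro x hx y hy hxy
      exact mul_left_cancel hxy
    · intro b hb
      simp only [Finset.mem_filter] at hb
      obtain ⟨hbA, hbφ⟩ := hb
      refine ⟨a₀⁻¹ * b, ?_, by group⟩
      simp only [Finset.mem_filter, Finset.mem_smul_finset, smul_eq_mul]
      refine ⟨⟨b, hbA, rfl⟩, ?_⟩
      simp only [hφ] at hbφ
      have : b * g = (b * g * b⁻¹) * b := by group
      rw [mul_assoc, this, hbφ]
      group
  -- image bound
  have hfin : ((A : Set G) * {g} * (A : Set G)⁻¹).Finite :=
    ((A.finite_toSet.mul (Set.finite_singleton g)).mul A.finite_toSet.inv)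
  have hS : N ≤ ({x : G | IsConj g x} ∩ ((A : Set G) * {g} * (A : Set G)⁻¹)).ncard := by
    have hsub : (↑T : Set G) ⊆
        {x : G | IsConj g x} ∩ ((A : Set G) * {g} * (A : Set G)⁻¹) := by
      intro x hx
      simp only [hT, Finset.coe_image, Set.mem_image, Finset.mem_coe] at hx
      obtain ⟨a, ha, rfl⟩ := hx
      constructor
      · exact isConj_iff.2 ⟨a, rfl⟩
      · exact Set.mul_mem_mul (Set.mul_mem_mul (by simpa using ha) rfl)
          (Set.inv_mem_inv.2 (by simpa using ha))
    calc N = (↑T : Set G).ncard := (Set.ncard_coe_finset T).symm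
      _ ≤ _ := Set.ncard_le_ncard hsub (Set.Finite.inter_of_right hfin _)
  -- pigeonhole
  set A₀ : Finset G := A.filter (fun a => A.card ≤ 2 * N * f a) with hA₀def
  have hsubA : A₀ ⊆ A := Finset.filter_subset _ _
  set Bad : Finset G := A.filter (fun a => ¬ (A.card ≤ 2 * N * f a)) with hBaddef
  have hcards : A₀.card + Bad.card = A.card :=
    Finset.card_filter_add_card_filter_not _
  have hBadA : Bad ⊆ A := Finset.filter_subset _ _
  have hBad : 2 * Bad.card ≤ A.card := by
    rcases Bad.eq_empty_or_nonempty with h | h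
    · simp [h]
    · have hsum : Bad.card = ∑ t ∈ Bad.image φ, (Bad.filter (fun a => φ a = t)).card :=
        Finset.card_eq_sum_card_image φ Bad
      have hstep : ∀ t ∈ Bad.image φ,
          2 * N * (Bad.filter (fun a => φ a = t)).card < A.card := by
        intro t ht
        obtain ⟨a, haBad, rfl⟩ := Finset.mem_image.1 ht
        have hsub2 : Bad.filter (fun b => φ b = φ a) ⊆ A.filter (fun b => φ b = φ a) :=
          Finset.filter_subset_filter _ hBadA
        have h1 : (Bad.filter (fun b => φ b = φ a)).card ≤ f a :=
          Finset.card_le_card hsub2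
        have h2 : ¬ (A.card ≤ 2 * N * f a) := (Finset.mem_filter.1 haBad).2
        have h3 : 2 * N * f a < A.card := Nat.lt_of_not_le h2
        calc 2 * N * (Bad.filter (fun b => φ b = φ a)).card
            ≤ 2 * N * f a := Nat.mul_le_mul_left _ h1
          _ < A.card := h3
      have himg : (Bad.image φ).card ≤ N :=
        Finset.card_le_card (Finset.image_subset_image hBadA)
      have hlt : 2 * N * Bad.card < N * A.card := by
        calc 2 * N * Bad.card
            = ∑ t ∈ Bad.image φ, 2 * N * (Bad.filter (fun a => φ a = t)).card := by
              rw [hsum, Finset.mul_sum]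
          _ < ∑ t ∈ Bad.image φ, A.card :=
              Finset.sum_lt_sum_of_nonempty (h.image φ) hstep
          _ = (Bad.image φ).card * A.card := by rw [Finset.sum_const, smul_eq_mul]
          _ ≤ N * A.card := Nat.mul_le_mul_right _ himg
      have : N * (2 * Bad.card) < N * A.card := by
        calc N * (2 * Bad.card) = 2 * N * Bad.card := by ring
          _ < N * A.card := hlt
      exact le_of_lt (Nat.lt_of_mul_lt_mul_left this)
  refine ⟨A₀, hsubA, ?_, ?_⟩
  · have : A.card ≤ 2 * A₀.card := by omega
    have := (Nat.cast_le (α := ℝ)).2 this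
    push_cast at this
    linarith
  · intro a₀ ha₀
    have ha₀A : a₀ ∈ A := hsubA ha₀
    have hkey : A.card ≤ 2 * N * f a₀ := (Finset.mem_filter.1 ha₀).2
    have hmul : N * f a₀ ≤
        ({x : G | IsConj g x} ∩ ((A : Set G) * {g} * (A : Set G)⁻¹)).ncard *
          ({x : G | x * g = g * x} ∩ (a₀⁻¹ • (A : Set G))).ncard := by
      rw [hfiber a₀ ha₀A]
      exact Nat.mul_le_mul_right _ hS
    have h1 := (Nat.cast_le (α := ℝ)).2 hkey
    have h2 := (Nat.cast_le (α := ℝ)).2 hmul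
    push_cast at h1 h2
    linarith
end

section
/- Let q ≥ 3, fix g = (a b; c d) ∈ SL₂(F_q) with c ≠ 0, and fix x = (α β; γ δ) ∈ SL₂(F_q). If there exist upper-triangular matrices u₁ = (λ u; 0 λ⁻¹) and u₂ = (μ v; 0 μ⁻¹) in SL₂(F_q) with u₁ g u₂ = x, then γ ≠ 0, and for each fixed value of λ ∈ F_q* there is at most one pair (u, μ, v) completing such a factorization. -/
/-!
The lower-left entry of `(λ u; 0 λ⁻¹) g (μ v; 0 μ⁻¹)` is `λ⁻¹ c μ`, which is nonzero. Once `λ` is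
fixed it determines `μ`; then the upper-left entry `(λ a + u c) μ` determines `u` because `c ≠ 0`,
and the lower-right entry `λ⁻¹ c v + λ⁻¹ d μ⁻¹` determines `v`.
-/

open Matrix

section

variable {F : Type*} [Field F]

theorem upperTriangular_mul_mul_upperTriangular (lam u a b c d mu v : F) :
    !![lam, u; 0, lam⁻¹] * !![a, b; c, d] * !![mu, v; 0, mu⁻¹] =
      !![(lam * a + u * c) * mu, (lam * a + u * c) * v + (lam * b + u * d) * mu⁻¹;
        lam⁻¹ * c * mu, lam⁻¹ * c * v + lam⁻¹ * d * mu⁻¹] := by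
  simp only [mul_fin_two, zero_mul, zero_add, mul_zero, add_zero]

theorem entries_of_upperTriangular_mul_mul_eq {lam u a b c d mu v α β γ δ : F}
    (h : !![lam, u; 0, lam⁻¹] * !![a, b; c, d] * !![mu, v; 0, mu⁻¹] = !![α, β; γ, δ]) :
    (lam * a + u * c) * mu = α ∧ lam⁻¹ * c * mu = γ ∧ lam⁻¹ * c * v + lam⁻¹ * d * mu⁻¹ = δ := by
  rw [upperTriangular_mul_mul_upperTriangular] at h
  exact ⟨congrFun₂ h 0 0, congrFun₂ h 1 0, congrFun₂ h 1 1⟩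

theorem lowerLeft_ne_zero_of_upperTriangular_mul_mul_eq {lam u a b c d mu v α β γ δ : F}
    (hlam : lam ≠ 0) (hc : c ≠ 0) (hmu : mu ≠ 0)
    (h : !![lam, u; 0, lam⁻¹] * !![a, b; c, d] * !![mu, v; 0, mu⁻¹] = !![α, β; γ, δ]) :
    γ ≠ 0 := by
  rw [← (entries_of_upperTriangular_mul_mul_eq h).2.1]
  exact mul_ne_zero (mul_ne_zero (inv_ne_zero hlam) hc) hmu

theorem upperTriangular_mul_mul_upperTriangular_injective {lam a b c d u₁ mu₁ v₁ u₂ mu₂ v₂ : F}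
    (hlam : lam ≠ 0) (hc : c ≠ 0) (hmu₁ : mu₁ ≠ 0)
    (h : !![lam, u₁; 0, lam⁻¹] * !![a, b; c, d] * !![mu₁, v₁; 0, mu₁⁻¹] =
      !![lam, u₂; 0, lam⁻¹] * !![a, b; c, d] * !![mu₂, v₂; 0, mu₂⁻¹]) :
    (u₁, mu₁, v₁) = (u₂, mu₂, v₂) := by
  rw [upperTriangular_mul_mul_upperTriangular] at h
  obtain ⟨h₀₀, h₁₀, h₁₁⟩ := entries_of_upperTriangular_mul_mul_eq h.symm
  have hlc : lam⁻¹ * c ≠ 0 := mul_ne_zero (inv_ne_zero hlam) hc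
  obtain rfl : mu₁ = mu₂ := mul_left_cancel₀ hlc h₁₀.symm
  obtain rfl : u₁ = u₂ := by
    have : lam * a + u₁ * c = lam * a + u₂ * c := mul_right_cancel₀ hmu₁ h₀₀.symm
    exact mul_right_cancel₀ hc (add_left_cancel this)
  obtain rfl : v₁ = v₂ := mul_left_cancel₀ hlc (add_right_cancel h₁₁.symm)
  rfl

end

theorem borel_double_coset_unique_general {F : Type*} [Field F]
    (a b c d α β γ δ : F) (hc : c ≠ 0)
    (hex : ∃ lam u mu v : F, lam ≠ 0 ∧ mu ≠ 0 ∧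
      !![lam, u; 0, lam⁻¹] * !![a, b; c, d] * !![mu, v; 0, mu⁻¹] = !![α, β; γ, δ]) :
    γ ≠ 0 ∧ ∀ lam : F, lam ≠ 0 → ∀ u₁ mu₁ v₁ u₂ mu₂ v₂ : F, mu₁ ≠ 0 → mu₂ ≠ 0 →
      !![lam, u₁; 0, lam⁻¹] * !![a, b; c, d] * !![mu₁, v₁; 0, mu₁⁻¹] = !![α, β; γ, δ] →
      !![lam, u₂; 0, lam⁻¹] * !![a, b; c, d] * !![mu₂, v₂; 0, mu₂⁻¹] = !![α, β; γ, δ] →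
      (u₁, mu₁, v₁) = (u₂, mu₂, v₂) := by
  obtain ⟨lam, u, mu, v, hlam, hmu, h⟩ := hex
  refine ⟨lowerLeft_ne_zero_of_upperTriangular_mul_mul_eq hlam hc hmu h, ?_⟩
  intro lam hlam u₁ mu₁ v₁ u₂ mu₂ v₂ hmu₁ _ h₁ h₂
  exact upperTriangular_mul_mul_upperTriangular_injective hlam hc hmu₁ (h₁.trans h₂.symm)

/-- Let `g = (a b; c d) ∈ SL₂(F_q)` with `c ≠ 0` and `x = (α β; γ δ) ∈ SL₂(F_q)`.
If `x = u₁ g u₂` for some upper-triangular `u₁ = (λ u; 0 λ⁻¹)`, `u₂ = (μ v; 0 μ⁻¹)`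
in `SL₂(F_q)`, then `γ ≠ 0`, and for each fixed `λ ∈ F_q*` there is at most one
triple `(u, μ, v)` giving such a factorization. -/
theorem borel_double_coset_unique {F : Type*} [Field F] [Fintype F] [DecidableEq F]
    (q : ℕ) (hq : Fintype.card F = q) (hq3 : 3 ≤ q)
    (a b c d α β γ δ : F) (hg : a * d - b * c = 1) (hx : α * δ - β * γ = 1) (hc : c ≠ 0)
    (hex : ∃ lam u mu v : F, lam ≠ 0 ∧ mu ≠ 0 ∧
      !![lam, u; 0, lam⁻¹] * !![a, b; c, d] * !![mu, v; 0, mu⁻¹] = !![α, β; γ, δ]) :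
    γ ≠ 0 ∧ ∀ lam : F, lam ≠ 0 → ∀ u₁ mu₁ v₁ u₂ mu₂ v₂ : F, mu₁ ≠ 0 → mu₂ ≠ 0 →
      !![lam, u₁; 0, lam⁻¹] * !![a, b; c, d] * !![mu₁, v₁; 0, mu₁⁻¹] = !![α, β; γ, δ] →
      !![lam, u₂; 0, lam⁻¹] * !![a, b; c, d] * !![mu₂, v₂; 0, mu₂⁻¹] = !![α, β; γ, δ] →
      (u₁, mu₁, v₁) = (u₂, mu₂, v₂) :=
  borel_double_coset_unique_general a b c d α β γ δ hc hex
end
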